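/- arXiv:1903.12426 — 2 statements merged into one kernel-verified Lean document; each statement's English description precedes it below -/
import Mathlib

section
/- Let A > 0, q > 0, σ₀ > 0 and suppose σ₁ = 0. Then the proportional-reinsurance objective Ψ(u) = qu + (μ² − σ₀²u²σ₂²A²)/(2σ₂²A) on [0,1] has unique maximiser u* = min(q/(σ₀²A), 1); in particular u* > 0, so full reinsurance is never optimal. -/
/-- Corollary 5.11: with `σ₁ = 0` the proportional-reinsurance objective
`Ψ u = qu + (μ² - σ₀²u²σ₂²A²)/(2σ₂²A)` on `[0,1]` has unique maximiser
`u* = min (q/(σ₀²A)) 1 > 0`; full reinsurance is never optimal. -/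
theorem stmt_14 (q σ₀ σ₂ μ A : ℝ)
    (hq : 0 < q) (hσ₀ : 0 < σ₀) (hσ₂ : 0 < σ₂) (hA : 0 < A) (hμ : 0 ≤ μ)
    (Ψ : ℝ → ℝ)
    (hΨ : ∀ u, Ψ u = q * u +
      (μ ^ 2 - σ₀ ^ 2 * u ^ 2 * σ₂ ^ 2 * A ^ 2) / (2 * σ₂ ^ 2 * A)) :
    IsMaxOn Ψ (Set.Icc 0 1) (min (q / (σ₀ ^ 2 * A)) 1) ∧
    (∀ v ∈ Set.Icc (0 : ℝ) 1, IsMaxOn Ψ (Set.Icc 0 1) v →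
      v = min (q / (σ₀ ^ 2 * A)) 1) ∧
    0 < min (q / (σ₀ ^ 2 * A)) 1 := by
  have hk : 0 < σ₀ ^ 2 * A := by positivity
  set u : ℝ := min (q / (σ₀ ^ 2 * A)) 1 with hu
  have hu0 : 0 < u := lt_min (div_pos hq hk) one_pos
  have hu1 : u ≤ 1 := min_le_right _ _
  have hΨ' : ∀ w, Ψ w = q * w - σ₀ ^ 2 * A * w ^ 2 / 2 + μ ^ 2 / (2 * σ₂ ^ 2 * A) := by
    intro w; rw [hΨ]; field_simp; ring
  have key : ∀ v ∈ Set.Icc (0 : ℝ) 1, v ≠ u → Ψ v < Ψ u := by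
    intro v hv hne
    rw [hΨ' v, hΨ' u]
    have hv0 := hv.1
    have hv1 := hv.2
    rcases le_or_gt (q / (σ₀ ^ 2 * A)) 1 with h | h
    · have hue : u = q / (σ₀ ^ 2 * A) := min_eq_left h
      have hqeq : q = u * (σ₀ ^ 2 * A) := by
        rw [hue]; field_simp
      have hsq : 0 < (v - u) ^ 2 :=
        lt_of_le_of_ne (sq_nonneg _) (Ne.symm (pow_ne_zero 2 (sub_ne_zero.mpr hne)))
      nlinarith [mul_pos hk hsq, hqeq]
    · have hue : u = 1 := min_eq_right h.le
      have hkq : σ₀ ^ 2 * A < q := by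
        have := (one_lt_div hk).mp h
        linarith
      have hvlt : v < 1 := lt_of_le_of_ne hv1 (by rw [hue] at hne; exact hne)
      rw [hue]
      nlinarith [mul_pos (sub_pos.mpr hvlt) (show (0:ℝ) < q - σ₀ ^ 2 * A / 2 * (1 + v) by nlinarith)]
  refine ⟨?_, ?_, hu0⟩
  · rw [isMaxOn_iff]
    intro v hv
    rcases eq_or_ne v u with rfl | hne
    · exact le_refl _
    · exact (key v hv hne).le
  · intro v hv hmax
    by_contra hne
    have h1 : Ψ v < Ψ u := key v hv hne
    have h2 : Ψ u ≤ Ψ v := hmax ⟨hu0.le, hu1⟩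
    linarith
end

section
/- For the SAHARA risk aversion A(x) = a/√(b²+(x−d)²), the optimal excess-of-loss retention with σ₁ = 0 is u*(x) = θ/A(x) = (θ/a)√(b²+(x−d)²); it is symmetric about x = d, minimal at x = d with value θb/a, and strictly increasing in |x − d|. -/
/-- Corollary 5.12: with `σ₁ = 0` the optimal excess-of-loss retention is
`u*(x) = θ/A(x) = (θ/a)√(b²+(x-d)²)`; it is symmetric about `d`, minimal at
`d` with value `θb/a`, and strictly increasing in `|x - d|`. -/
theorem stmt_15 (θ a b d : ℝ) (hθ : 0 < θ) (ha : 0 < a) (hb : 0 < b)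
    (A ustar : ℝ → ℝ)
    (hA : ∀ x, A x = a / Real.sqrt (b ^ 2 + (x - d) ^ 2))
    (hu : ∀ x, ustar x = θ / A x) :
    (∀ x, ustar x = (θ / a) * Real.sqrt (b ^ 2 + (x - d) ^ 2)) ∧
    (∀ t : ℝ, ustar (d + t) = ustar (d - t)) ∧
    ustar d = θ * b / a ∧ (∀ x, θ * b / a ≤ ustar x) ∧
    (∀ x₁ x₂, |x₁ - d| < |x₂ - d| → ustar x₁ < ustar x₂) := by
  have hpos : ∀ x : ℝ, 0 < b ^ 2 + (x - d) ^ 2 := fun x =>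
    add_pos_of_pos_of_nonneg (pow_pos hb 2) (sq_nonneg _)
  have hform : ∀ x, ustar x = (θ / a) * Real.sqrt (b ^ 2 + (x - d) ^ 2) := by
    intro x
    have hs : Real.sqrt (b ^ 2 + (x - d) ^ 2) ≠ 0 :=
      ne_of_gt (Real.sqrt_pos.mpr (hpos x))
    rw [hu, hA]
    field_simp
  refine ⟨hform, ?_, ?_, ?_, ?_⟩
  · intro t
    rw [hform, hform]
    ring_nf
  · rw [hform]
    simp [Real.sqrt_sq hb.le]
    ring
  · intro x
    rw [hform]
    have h1 : Real.sqrt (b ^ 2) ≤ Real.sqrt (b ^ 2 + (x - d) ^ 2) :=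
      Real.sqrt_le_sqrt (by nlinarith [sq_nonneg (x - d)])
    rw [Real.sqrt_sq hb.le] at h1
    calc θ * b / a = (θ / a) * b := by ring
    _ ≤ (θ / a) * Real.sqrt (b ^ 2 + (x - d) ^ 2) := by
        apply mul_le_mul_of_nonneg_left h1 (by positivity)
  · intro x₁ x₂ h
    rw [hform, hform]
    apply mul_lt_mul_of_pos_left _ (by positivity)
    apply Real.sqrt_lt_sqrt (hpos x₁).le
    nlinarith [sq_abs (x₁ - d), sq_abs (x₂ - d), mul_self_lt_mul_self (abs_nonneg (x₁ - d)) h]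
end
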